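/- Let q > n ≥ 1 be integers, let γ ∈ ℝ, and let λ_1, …, λ_q be real numbers such that for every subset J ⊆ {1,…,q} with #J = n+1 one has min_{j∈J} λ_j ≤ γ. Then Σ_{i=1}^q λ_i ≤ max_{I ⊆ {1,…,q}, #I = n} Σ_{i∈I} λ_i + (q−n)·γ. -/

import Mathlib

/-!
Let `I` be a set of `n` indices carrying the `n` largest values of `λ`. For `i ∉ I`, the value
`λ i` is the minimum over the `(n + 1)`-set `insert i I`, so `λ i ≤ γ`. Splitting the sum along
`I` and its complement gives the bound.
-/

open Finset

namespace Finset

theorem exists_subset_card_eq_forall_le {α β : Type*} [DecidableEq α] [LinearOrder β]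
    (f : α → β) {k : ℕ} {s : Finset α} (hk : k ≤ #s) :
    ∃ I ⊆ s, #I = k ∧ ∀ i ∈ s, i ∉ I → ∀ j ∈ I, f i ≤ f j := by
  induction k generalizing s with
  | zero => exact ⟨∅, empty_subset s, rfl, by simp⟩
  | succ k ih =>
    obtain ⟨m, hms, hm_max⟩ := s.exists_max_image f (card_pos.mp (by omega))
    obtain ⟨I, hIs, hIcard, hItop⟩ := ih (s := s.erase m) (by rw [card_erase_of_mem hms]; omega)
    have hmI : m ∉ I := fun h => notMem_erase m s (hIs h)
    refine ⟨insert m I, insert_subset hms (hIs.trans (erase_subset m s)), by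
      rw [card_insert_of_notMem hmI, hIcard], ?_⟩
    intro i his hiI j hj
    rw [mem_insert, not_or] at hiI
    rcases mem_insert.mp hj with rfl | hjI
    · exact hm_max i his
    · exact hItop i (mem_erase.mpr ⟨hiI.1, his⟩) hiI.2 j hjI

end Finset

/-- **(Combinatorial core of the Weil-function inequality for divisors in
general position.)**  Let `q > n ≥ 1` be integers, let `γ` be a real number,
and let `λ 1, …, λ q` be real numbers such that for every subset
`J ⊆ {1,…,q}` with `#J = n + 1` one has `min_{j ∈ J} λ j ≤ γ`.  Then
`∑ i, λ i ≤ max_{#I = n} ∑_{i ∈ I} λ i + (q − n)·γ`. -/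
theorem sum_le_max_subset_sum_add_of_min_le
    (q n : ℕ) (hq : n < q) (γ : ℝ) (lam : Fin q → ℝ)
    (hmin : ∀ J : Finset (Fin q), ∀ hJ : J.card = n + 1,
      J.inf' (Finset.card_pos.mp (by omega)) lam ≤ γ) :
    ∑ i, lam i ≤
      (Finset.univ.powersetCard n).sup'
          (Finset.powersetCard_nonempty.mpr (by simpa using hq.le))
          (fun I => ∑ i ∈ I, lam i)
        + ((q : ℝ) - n) * γ := by
  obtain ⟨I, -, hIcard, hItop⟩ :=
    exists_subset_card_eq_forall_le lam (s := (univ : Finset (Fin q))) (by simpa using hq.le)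
  have hout : ∀ i ∈ Iᶜ, lam i ≤ γ := by
    intro i hi
    have hiI : i ∉ I := mem_compl.mp hi
    refine le_trans ?_ (hmin (insert i I) (by rw [card_insert_of_notMem hiI, hIcard]))
    refine le_inf' _ _ fun j hj => ?_
    rcases mem_insert.mp hj with rfl | hjI
    · exact le_rfl
    · exact hItop i (mem_univ i) hiI j hjI
  calc ∑ i, lam i = ∑ i ∈ I, lam i + ∑ i ∈ Iᶜ, lam i := (I.sum_add_sum_compl lam).symm
    _ ≤ (univ.powersetCard n).sup' (powersetCard_nonempty.mpr (by simpa using hq.le))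
          (fun I => ∑ i ∈ I, lam i) + #Iᶜ • γ :=
        add_le_add
          (le_sup' (fun I => ∑ i ∈ I, lam i) (mem_powersetCard.mpr ⟨subset_univ I, hIcard⟩))
          (sum_le_card_nsmul _ _ _ hout)
    _ = _ := by rw [card_compl, hIcard, nsmul_eq_mul, Fintype.card_fin, Nat.cast_sub hq.le]
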